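/- Let à := A ⊗_𝒪 𝒪Aut(P), with P acting 𝒪-linearly by (a⊗φ)^u := u^{-1}·a·φ(u) ⊗ φ for u ∈ P, a ∈ A, φ ∈ Aut(P). This is a well-defined action of P on Ã, and an element a⊗φ is fixed by P if and only if a ∈ A^{Δ_φ(P)}; consequently Ã^P = ⊕_{φ∈Aut(P)} A^{Δ_φ(P)} ⊗ φ. Moreover, with the multiplication (a⊗φ)(b⊗ψ) := ab ⊗ ψ∘φ on Ã, the fixed-point submodule Ã^P is closed under multiplication. -/

import Mathlib

open scoped Classical

section Common

variable (𝒪 : Type*) [CommRing 𝒪]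
variable {A : Type*} [Ring A] [Algebra 𝒪 A]
variable {P : Type*} [Group P]

/-- `A^{Δ_φ(Q)}`: elements `a` with `u·a = a·φ(u)` for all `u ∈ Q`. -/
def intFixed (σ : P →* Aˣ) (φ : P ≃* P) (Q : Subgroup P) : Submodule 𝒪 A where
  carrier := {a | ∀ u ∈ Q, (σ u : A) * a = a * (σ (φ u) : A)}
  add_mem' := by intro a b ha hb u hu; rw [mul_add, add_mul, ha u hu, hb u hu]
  zero_mem' := by intro u hu; rw [mul_zero, zero_mul]
  smul_mem' := by intro r a ha u hu
                  rw [mul_smul_comm, smul_mul_assoc, ha u hu]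

/-- the `𝒪`-linear map `a ↦ u⁻¹·a·φ(u)` on `A`. -/
def conjMap (σ : P →* Aˣ) (φ : MulAut P) (u : P) : A →ₗ[𝒪] A :=
  (LinearMap.mulRight 𝒪 ((σ (φ u) : A))).comp
    (LinearMap.mulLeft 𝒪 (((σ u)⁻¹ : Aˣ) : A))

/-- `Ã := A ⊗_𝒪 𝒪Aut(P)`, realized as finitely supported functions `Aut(P) →₀ A`
(`a ⊗ φ` corresponding to `single φ a`), with the `𝒪`-linear endomorphism
`a ⊗ φ ↦ (a ⊗ φ)^u = u⁻¹·a·φ(u) ⊗ φ` for each `u ∈ P`. -/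
noncomputable def tAct (σ : P →* Aˣ) (u : P) :
    (MulAut P →₀ A) →ₗ[𝒪] (MulAut P →₀ A) :=
  Finsupp.lsum 𝒪 fun φ : MulAut P => (Finsupp.lsingle φ).comp (conjMap 𝒪 σ φ u)

/-- the multiplication `(a ⊗ φ)(b ⊗ ψ) := ab ⊗ ψ∘φ` on `Ã = A ⊗_𝒪 𝒪Aut(P)`. -/
noncomputable def mulT (f g : MulAut P →₀ A) : MulAut P →₀ A :=
  f.sum fun φ a => g.sum fun ψ b => Finsupp.single (φ.trans ψ) (a * b)

-- aux lemmas
lemma tAct_single (σ : P →* Aˣ) (u : P) (φ : MulAut P) (a : A) :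
    tAct 𝒪 σ u (Finsupp.single φ a)
      = Finsupp.single φ ((((σ u)⁻¹ : Aˣ) : A) * a * (σ (φ u) : A)) := by
  simp [tAct, conjMap, mul_assoc]

lemma tAct_apply (σ : P →* Aˣ) (u : P) (f : MulAut P →₀ A) (φ : MulAut P) :
    tAct 𝒪 σ u f φ = (((σ u)⁻¹ : Aˣ) : A) * f φ * (σ (φ u) : A) := by
  classical
  induction f using Finsupp.induction_linear with
  | zero => simp
  | add f g hf hg => simp [hf, hg, mul_add, add_mul]
  | single ψ a =>
      rw [tAct_single]
      by_cases h : ψ = φ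
      · subst h; simp
      · simp [Finsupp.single_apply, h]

lemma fixed_iff (σ : P →* Aˣ) (f : MulAut P →₀ A) :
    (∀ u : P, tAct 𝒪 σ u f = f) ↔ ∀ φ : MulAut P, f φ ∈ intFixed 𝒪 σ φ ⊤ := by
  constructor
  · intro h φ u _
    have := congrArg (fun g : MulAut P →₀ A => g φ) (h u)
    simp only [tAct_apply] at this
    calc (σ u : A) * f φ = (σ u : A) * ((((σ u)⁻¹ : Aˣ) : A) * f φ * (σ (φ u) : A)) := by
          rw [this]
      _ = f φ * (σ (φ u) : A) := by
          rw [← mul_assoc, ← mul_assoc, Units.mul_inv, one_mul]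
  · intro h u
    ext φ
    rw [tAct_apply, mul_assoc, ← h φ u (Subgroup.mem_top u), ← mul_assoc,
      Units.inv_mul, one_mul]

end Common

/-- Let `Ã := A ⊗_𝒪 𝒪Aut(P)` (modelled as `Aut(P) →₀ A`, with `a ⊗ φ`
corresponding to `single φ a`), and for `u ∈ P` let `(a ⊗ φ)^u := u⁻¹·a·φ(u) ⊗ φ`.  This is a
well-defined (right, `𝒪`-linear) action of `P` on `Ã`; an element `a ⊗ φ` is fixed by `P` iff
`a ∈ A^{Δ_φ(P)}`, and consequently `Ã^P = ⊕_{φ ∈ Aut(P)} A^{Δ_φ(P)} ⊗ φ` (an element of `Ã`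
is `P`-fixed iff each of its components `f φ` lies in `A^{Δ_φ(P)}`).  Moreover, for the
multiplication `(a⊗φ)(b⊗ψ) := ab ⊗ ψ∘φ` on `Ã`, the fixed-point submodule `Ã^P` is closed
under multiplication. -/
theorem stmt3
    (𝒪 : Type*) [CommRing 𝒪] [IsDomain 𝒪] [IsDiscreteValuationRing 𝒪]
    [IsAdicComplete (IsLocalRing.maximalIdeal 𝒪) 𝒪]
    (p : ℕ) [Fact p.Prime] [CharP (IsLocalRing.ResidueField 𝒪) p]
    (P : Type*) [Group P] [Finite P] (hP : IsPGroup p P)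
    (A : Type*) [Ring A] [Algebra 𝒪 A] (σ : P →* Aˣ) :
    -- `^` is an action of `P`:
    (tAct 𝒪 σ (1 : P) = LinearMap.id) ∧
    (∀ u v : P, (tAct 𝒪 σ v).comp (tAct 𝒪 σ u) = tAct 𝒪 σ (u * v)) ∧
    -- `a ⊗ φ` is `P`-fixed iff `a ∈ A^{Δ_φ(P)}`:
    (∀ (φ : MulAut P) (a : A),
      (∀ u : P, tAct 𝒪 σ u (Finsupp.single φ a) = Finsupp.single φ a) ↔
        a ∈ intFixed 𝒪 σ φ ⊤) ∧
    -- consequently `Ã^P = ⊕_{φ∈Aut(P)} A^{Δ_φ(P)} ⊗ φ`: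
    (∀ f : MulAut P →₀ A,
      (∀ u : P, tAct 𝒪 σ u f = f) ↔ ∀ φ : MulAut P, f φ ∈ intFixed 𝒪 σ φ ⊤) ∧
    -- `Ã^P` is closed under the multiplication `(a⊗φ)(b⊗ψ) = ab ⊗ ψ∘φ`:
    (∀ f g : MulAut P →₀ A, (∀ u : P, tAct 𝒪 σ u f = f) → (∀ u : P, tAct 𝒪 σ u g = g) →
      ∀ u : P, tAct 𝒪 σ u (mulT f g) = mulT f g) := by
  refine ⟨?_, ?_, ?_, fixed_iff 𝒪 σ, ?_⟩
  · ext f φ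
    simp [tAct_apply]
  · intro u v
    ext f φ
    simp [tAct_apply, mul_assoc, map_mul]
  · intro φ a
    rw [fixed_iff]
    constructor
    · intro h
      have := h φ
      simpa using this
    · intro h ψ
      by_cases hψ : ψ = φ
      · subst hψ; simpa using h
      · rw [Finsupp.single_apply, if_neg (Ne.symm hψ)]
        exact Submodule.zero_mem _
  · intro f g hf hg
    rw [fixed_iff 𝒪 σ] at hf hg
    rw [fixed_iff 𝒪 σ]
    intro φ v _
    have key : ∀ (ψ χ : MulAut P) (a b : A), a ∈ intFixed 𝒪 σ ψ ⊤ → b ∈ intFixed 𝒪 σ χ ⊤ →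
        a * b ∈ intFixed 𝒪 σ (ψ.trans χ) ⊤ := by
      intro ψ χ a b ha hb w _
      calc (σ w : A) * (a * b) = a * ((σ (ψ w) : A) * b) := by
            rw [← mul_assoc, ha w (Subgroup.mem_top w), mul_assoc]
        _ = a * b * (σ ((ψ.trans χ) w) : A) := by
            rw [hb (ψ w) (Subgroup.mem_top _)]; simp [mul_assoc]
    -- show component of mulT in intFixed
    have hmem : ∀ φ : MulAut P, mulT f g φ ∈ intFixed 𝒪 σ φ ⊤ := by
      intro φ
      rw [mulT, Finsupp.sum_apply, Finsupp.sum]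
      apply Submodule.sum_mem
      intro ψ _
      rw [Finsupp.sum_apply, Finsupp.sum]
      apply Submodule.sum_mem
      intro χ _
      by_cases h : ψ.trans χ = φ
      · rw [Finsupp.single_apply, if_pos h, ← h]
        exact key ψ χ _ _ (hf ψ) (hg χ)
      · rw [Finsupp.single_apply, if_neg h]
        exact Submodule.zero_mem _
    exact hmem φ v (Subgroup.mem_top v)
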